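/- The dual labeling λ_•^* is an EL-labeling of the order dual (Π_n^•)^* of the pointed partition poset: every closed interval of (Π_n^•)^* contains a unique increasing maximal chain which lexicographically precedes all other maximal chains of that interval, where cover relations of (Π_n^•)^* carry the same labels as the corresponding cover relations of Π_n^• and the label poset is the order dual (Λ_n^•)^*. Consequently the maximal intervals of (Π_n^•)^* are EL-shellable. -/

import Mathlib

open Finset

open scoped BigOperators Classical

/-! ## Generic machinery for edge labelings of posets presented by cover relations -/

section Chains

variable {α : Type*} {L : Type*}

/-- The word of labels read along a list of poset elements. -/
def wordOf (lab : α → α → L) : List α → List L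
  | x :: y :: rest => lab x y :: wordOf lab (y :: rest)
  | _ => []

/-- `c` is a saturated chain from `x` to `y` with respect to the cover relation `cov`;
in a graded poset these are exactly the maximal chains of the interval `[x, y]`. -/
def IsSatChain (cov : α → α → Prop) (x y : α) (c : List α) : Prop :=
  c.Chain' cov ∧ c.head? = some x ∧ c.getLast? = some y

/-- A word of labels is increasing if consecutive labels strictly increase. -/
def IncWord (lt : L → L → Prop) (w : List L) : Prop := w.Chain' lt

/-- A word of labels is ascent-free if no consecutive pair of labels strictly increases. -/
def AscFree (lt : L → L → Prop) (w : List L) : Prop := w.Chain' fun a b => ¬ lt a b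

/-- The partial order generated by a cover relation. -/
def leOf (cov : α → α → Prop) : α → α → Prop := Relation.ReflTransGen cov

/-- The strict order generated by a cover relation. -/
def ltOf (cov : α → α → Prop) (a b : α) : Prop := leOf cov a b ∧ a ≠ b

/-- An ER-labeling: every closed interval has a unique increasing maximal chain. -/
def IsERLabeling (cov : α → α → Prop) (lab : α → α → L) (lt : L → L → Prop) : Prop :=
  ∀ x y, leOf cov x y → ∃! c, IsSatChain cov x y c ∧ IncWord lt (wordOf lab c)

/-- The rank two switching property: in every rank-two interval whose increasing chain
has word of labels `ab`, there is a unique chain with word of labels `ba`. -/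
def RankTwoSwitch (cov : α → α → Prop) (lab : α → α → L) (lt : L → L → Prop) : Prop :=
  ∀ x y c a b, IsSatChain cov x y c → IncWord lt (wordOf lab c) → wordOf lab c = [a, b] →
    ∃! c', IsSatChain cov x y c' ∧ wordOf lab c' = [b, a]

/-- In every interval, distinct ascent-free maximal chains have distinct label words. -/
def AscFreeInj (cov : α → α → Prop) (lab : α → α → L) (lt : L → L → Prop) : Prop :=
  ∀ x y c c', IsSatChain cov x y c → IsSatChain cov x y c' →
    AscFree lt (wordOf lab c) → AscFree lt (wordOf lab c') →
    wordOf lab c = wordOf lab c' → c = c'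

/-- An EW-labeling. -/
def IsEWLabeling (cov : α → α → Prop) (lab : α → α → L) (lt : L → L → Prop) : Prop :=
  IsERLabeling cov lab lt ∧ RankTwoSwitch cov lab lt ∧ AscFreeInj cov lab lt

/-- An EL-labeling: every closed interval has a unique increasing maximal chain,
which lexicographically precedes every other maximal chain of the interval. -/
def IsELLabeling (cov : α → α → Prop) (lab : α → α → L) (lt : L → L → Prop) : Prop :=
  ∀ x y, leOf cov x y →
    ∃ c, (IsSatChain cov x y c ∧ IncWord lt (wordOf lab c)) ∧
      ∀ c', IsSatChain cov x y c' → c' ≠ c →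
        ¬ IncWord lt (wordOf lab c') ∧ List.Lex lt (wordOf lab c) (wordOf lab c')

end Chains

/-! ## Möbius functions and Whitney numbers -/

section Whitney

variable {α : Type*} {β : Type*}

/-- Auxiliary Möbius function computed with fuel; for an element of rank `k` of a
graded poset, fuel `k` computes the one-variable Möbius function `μ(0̂, ·)`. -/
noncomputable def muAux (ltr : α → α → Prop) (bot : α) : ℕ → α → ℤ
  | 0, x => if x = bot then 1 else 0
  | k + 1, x => if x = bot then 1 else - ∑ᶠ (y : α) (_ : ltr y x), muAux ltr bot k y

/-- The one-variable Möbius function `μ(0̂, x)` of a graded poset presented by its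
cover relation `cov`, minimum `bot` and rank function `rk`. -/
noncomputable def muBot (cov : α → α → Prop) (bot : α) (rk : α → ℕ) (x : α) : ℤ :=
  muAux (ltOf cov) bot (rk x) x

/-- The `k`-th Whitney number of the first kind. -/
noncomputable def whitney1 (cov : α → α → Prop) (bot : α) (rk : α → ℕ) (k : ℕ) : ℤ :=
  ∑ᶠ (x : α) (_ : rk x = k), muBot cov bot rk x

/-- The `k`-th Whitney number of the second kind. -/
noncomputable def whitney2 (rk : α → ℕ) (k : ℕ) : ℕ :=
  Nat.card {x : α // rk x = k}

/-- Two graded posets are Whitney duals if their Whitney numbers of the first and second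
kind are swapped (up to sign). -/
def IsWhitneyDual (covP : α → α → Prop) (botP : α) (rkP : α → ℕ)
    (covQ : β → β → Prop) (botQ : β) (rkQ : β → ℕ) : Prop :=
  ∀ k, (whitney1 covP botP rkP k).natAbs = whitney2 rkQ k ∧
       (whitney1 covQ botQ rkQ k).natAbs = whitney2 rkP k

/-- Two graded posets are Whitney twins if they have the same Whitney numbers of the first
and of the second kind. -/
def IsWhitneyTwin (covP : α → α → Prop) (botP : α) (rkP : α → ℕ)
    (covQ : β → β → Prop) (botQ : β) (rkQ : β → ℕ) : Prop :=
  ∀ k, whitney1 covP botP rkP k = whitney1 covQ botQ rkQ k ∧ whitney2 rkP k = whitney2 rkQ k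

/-- `(cov, bot, rk)` presents a graded poset with minimum `bot`. -/
def IsGradedPoset (cov : α → α → Prop) (bot : α) (rk : α → ℕ) : Prop :=
  (∀ x, leOf cov bot x) ∧ rk bot = 0 ∧ ∀ x y, cov x y → rk y = rk x + 1

/-- A graded poset has a Whitney dual. -/
def HasWhitneyDual {γ : Type} (cov : γ → γ → Prop) (bot : γ) (rk : γ → ℕ) : Prop :=
  ∃ (β : Type) (_ : Finite β) (covQ : β → β → Prop) (botQ : β) (rkQ : β → ℕ),
    IsGradedPoset covQ botQ rkQ ∧ IsWhitneyDual cov bot rk covQ botQ rkQ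

/-- Isomorphism of the posets generated by two cover relations. -/
def CovPosetIso (covP : α → α → Prop) (covQ : β → β → Prop) : Prop :=
  ∃ e : α ≃ β, ∀ x y, leOf covP x y ↔ leOf covQ (e x) (e y)

end Whitney

/-! ## The label posets `Λₙʷ` and `Λₙ•` (strict order relations)

Labels are triples `(a, b, u)` with `a < b` in `[n]` and `u ∈ {0,1}` (encoded as `Bool`). -/

/-- The strict order of `Λₙʷ = Γ₁ ⊕ ⋯ ⊕ Γ_{n-1}` where `Γ_a` carries the product order
`(a,b)ᵘ ≤ (a,c)ᵛ ↔ b ≤ c ∧ u ≤ v`. -/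
def ltLw (x y : ℕ × ℕ × Bool) : Prop :=
  x.1 < y.1 ∨ (x.1 = y.1 ∧ x.2.1 ≤ y.2.1 ∧ x.2.2 ≤ y.2.2 ∧ x.2 ≠ y.2)

/-- The strict order of `Λₙ• = A₁ ⊕ C₁ ⊕ ⋯ ⊕ A_{n-1} ⊕ C_{n-1}` where `A_a` is the
antichain of the `(a,b)⁰` and `C_a` is the chain of the `(a,b)¹` ordered by `b`. -/
def ltLp (x y : ℕ × ℕ × Bool) : Prop :=
  x.1 < y.1 ∨ (x.1 = y.1 ∧
    ((x.2.2 = false ∧ y.2.2 = true) ∨ (x.2.2 = true ∧ y.2.2 = true ∧ x.2.1 < y.2.1)))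

/-! ## Pointed and weighted partition posets -/

/-- The minimum of a finite set of naturals (`0` for the empty set). -/
def minB (B : Finset ℕ) : ℕ := B.min.untopD 0

/-- Pointed partitions of the ground set `A`: partitions of `A` into blocks, each block
carrying a distinguished (pointed) element.  A pointed block is a pair `(B, p)` with `p ∈ B`. -/
abbrev PPart (A : Finset ℕ) : Type :=
  {π : Finset (Finset ℕ × ℕ) //
    (∀ b ∈ π, b.2 ∈ b.1) ∧
    (∀ b ∈ π, ∀ b' ∈ π, b ≠ b' → Disjoint b.1 b'.1) ∧
    π.biUnion Prod.fst = A}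

/-- The cover relation of the pointed partition poset: merge two pointed blocks, the merged
block being pointed at the pointed element of one of the two. -/
def covPP {A : Finset ℕ} (π π' : PPart A) : Prop :=
  ∃ b1 ∈ π.1, ∃ b2 ∈ π.1, minB b1.1 < minB b2.1 ∧
    ∃ p : ℕ, (p = b1.2 ∨ p = b2.2) ∧
      π'.1 = insert (b1.1 ∪ b2.1, p) ((π.1.erase b1).erase b2)

/-- The labeling `λ•` (as a bare label map): the cover `u`-merging blocks `A, B` with
`min A < min B` gets the label `(min A, min B, u)`, where `u = 1` exactly when the merged
block is pointed at the pointed element of `A`. -/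
noncomputable def labPP {A : Finset ℕ} (π π' : PPart A) : ℕ × ℕ × Bool :=
  let olds := π.1 \ π'.1
  let mins := olds.image (fun b => minB b.1)
  (mins.min.untopD 0, mins.max.unbotD 0,
    if ∃ b ∈ olds, minB b.1 = mins.min.untopD 0 ∧ ∃ d ∈ π'.1 \ π.1, d.2 = b.2
      then true else false)

/-- The minimum of the pointed partition poset: all blocks are pointed singletons. -/
def botPP (A : Finset ℕ) : PPart A :=
  ⟨A.image fun i => ({i}, i), by
    refine ⟨?_, ?_, ?_⟩
    · intro b hb
      obtain ⟨i, -, rfl⟩ := Finset.mem_image.1 hb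
      exact Finset.mem_singleton_self i
    · intro b hb b' hb' hne
      obtain ⟨i, -, rfl⟩ := Finset.mem_image.1 hb
      obtain ⟨j, -, rfl⟩ := Finset.mem_image.1 hb'
      have hij : i ≠ j := fun h => hne (by rw [h])
      simp [Finset.disjoint_left, hij]
    · ext x
      simp⟩

/-- The rank function of the pointed partition poset. -/
def rkPP {A : Finset ℕ} (π : PPart A) : ℕ := A.card - π.1.card

/-- Weighted partitions of the ground set `A`: partitions of `A` into blocks, each block `B`
carrying a weight `v` with `0 ≤ v ≤ |B| - 1`. -/
abbrev WPart (A : Finset ℕ) : Type :=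
  {π : Finset (Finset ℕ × ℕ) //
    (∀ b ∈ π, b.2 < b.1.card) ∧
    (∀ b ∈ π, ∀ b' ∈ π, b ≠ b' → Disjoint b.1 b'.1) ∧
    π.biUnion Prod.fst = A}

/-- The cover relation of the weighted partition poset: merge blocks `A^v, B^w` into
`(A ∪ B)^(v+w+u)` for some `u ∈ {0,1}`. -/
def covWP {A : Finset ℕ} (π π' : WPart A) : Prop :=
  ∃ b1 ∈ π.1, ∃ b2 ∈ π.1, minB b1.1 < minB b2.1 ∧ ∃ u : Bool,
    π'.1 = insert (b1.1 ∪ b2.1, b1.2 + b2.2 + (if u then 1 else 0)) ((π.1.erase b1).erase b2)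

/-- The labeling `λ_w` (as a bare label map): the cover merging `A^v, B^w` with
`min A < min B` into `(A ∪ B)^(v+w+u)` gets the label `(min A, min B, u)`. -/
noncomputable def labWP {A : Finset ℕ} (π π' : WPart A) : ℕ × ℕ × Bool :=
  let olds := π.1 \ π'.1
  let mins := olds.image (fun b => minB b.1)
  (mins.min.untopD 0, mins.max.unbotD 0,
    if (π'.1 \ π.1).sum Prod.snd = olds.sum Prod.snd + 1 then true else false)

/-- The minimum of the weighted partition poset: all blocks singletons of weight `0`. -/
def botWP (A : Finset ℕ) : WPart A :=
  ⟨A.image fun i => ({i}, 0), by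
    refine ⟨?_, ?_, ?_⟩
    · intro b hb
      obtain ⟨i, -, rfl⟩ := Finset.mem_image.1 hb
      simp
    · intro b hb b' hb' hne
      obtain ⟨i, -, rfl⟩ := Finset.mem_image.1 hb
      obtain ⟨j, -, rfl⟩ := Finset.mem_image.1 hb'
      have hij : i ≠ j := fun h => hne (by rw [h])
      simp [Finset.disjoint_left, hij]
    · ext x
      simp⟩

/-- The rank function of the weighted partition poset. -/
def rkWP {A : Finset ℕ} (π : WPart A) : ℕ := A.card - π.1.card
/-! ## Bicolored binary trees and Lyndon forests -/

/-- Planar binary trees with `ℕ`-labeled leaves and `Bool`-colored internal vertices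
(`false` = color 0, `true` = color 1). -/
inductive BT : Type
  | leaf : ℕ → BT
  | node : Bool → BT → BT → BT
deriving DecidableEq

namespace BT

/-- The valency: the minimum leaf label of a tree. -/
def nu : BT → ℕ
  | leaf a => a
  | node _ l r => min l.nu r.nu

/-- The set of leaf labels of a tree. -/
def leaves : BT → Finset ℕ
  | leaf a => {a}
  | node _ l r => l.leaves ∪ r.leaves

/-- The number of internal vertices of a tree. -/
def internals : BT → ℕ
  | leaf _ => 0
  | node _ l r => l.internals + r.internals + 1

/-- A tree is normalized if its leaf labels are distinct and every internal vertex has the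
same valency as its left child. -/
def normalized : BT → Prop
  | leaf _ => True
  | node _ l r => l.normalized ∧ r.normalized ∧ Disjoint l.leaves r.leaves ∧ l.nu < r.nu

/-- The pointed Lyndon condition: at every internal vertex `v` with internal left child,
`color (L v) ≥ color v`, and if `color (L v) = color v = 1` then `v` is a Lyndon vertex,
i.e. `ν (R (L v)) > ν (R v)`. -/
def pLyn : BT → Prop
  | leaf _ => True
  | node c l r => l.pLyn ∧ r.pLyn ∧
      (match l with
       | leaf _ => True
       | node c' _ r' => c ≤ c' ∧ ((c' = c ∧ c = true) → r.nu < r'.nu))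

/-- The bicolored Lyndon condition: every internal vertex with internal left child is
Lyndon (`ν (R (L v)) > ν (R v)`) or satisfies `color (L v) > color v`. -/
def wLyn : BT → Prop
  | leaf _ => True
  | node c l r => l.wLyn ∧ r.wLyn ∧
      (match l with
       | leaf _ => True
       | node c' _ r' => r.nu < r'.nu ∨ c < c')

/-- The pointed element of a bicolored tree: a `1`-colored vertex keeps the point of its
left subtree and a `0`-colored vertex keeps the point of its right subtree. -/
def ppt : BT → ℕ
  | leaf a => a
  | node c l r => if c then l.ppt else r.ppt

end BT

/-- `u`-merging of two pointed Lyndon trees: create a new root of color `u` with the two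
trees as subtrees, then repeatedly slide the new vertex together with its right subtree
past its left child until the pointed Lyndon condition holds at the new vertex. -/
def mergeP (u : Bool) : BT → BT → BT
  | BT.leaf a, t2 => BT.node u (BT.leaf a) t2
  | BT.node c a b, t2 =>
      if u ≤ c ∧ ((c = true ∧ u = true) → t2.nu < b.nu)
      then BT.node u (BT.node c a b) t2
      else BT.node c (mergeP u a t2) b

/-- `u`-merging of two bicolored Lyndon trees: create a new root of color `u` with the two
trees as subtrees, then repeatedly slide the new vertex together with its right subtree
past its left child until the bicolored Lyndon condition holds at the new vertex. -/
def mergeW (u : Bool) : BT → BT → BT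
  | BT.leaf a, t2 => BT.node u (BT.leaf a) t2
  | BT.node c a b, t2 =>
      if t2.nu < b.nu ∨ u < c
      then BT.node u (BT.node c a b) t2
      else BT.node c (mergeW u a t2) b

/-- A valid forest on the ground set `[n]`, each tree normalized and satisfying `P`, the
trees having pairwise disjoint leaf sets which together cover `[n] = {1, …, n}`. -/
def ForestValid (n : ℕ) (P : BT → Prop) (F : Finset BT) : Prop :=
  (∀ t ∈ F, t.normalized ∧ P t) ∧
  (∀ t ∈ F, ∀ t' ∈ F, t ≠ t' → Disjoint t.leaves t'.leaves) ∧
  F.biUnion BT.leaves = Finset.Icc 1 n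

/-- The set of pointed Lyndon forests on `[n]`. -/
abbrev FLynP (n : ℕ) : Type := {F : Finset BT // ForestValid n BT.pLyn F}

/-- The set of bicolored Lyndon forests on `[n]`. -/
abbrev FLynW (n : ℕ) : Type := {F : Finset BT // ForestValid n BT.wLyn F}

/-- The cover relation on forests: `u`-merge two of the trees (the one with smaller minimum
leaf label going to the left). -/
def covForest (merge : Bool → BT → BT → BT) (F F' : Finset BT) : Prop :=
  ∃ t1 ∈ F, ∃ t2 ∈ F, t1.nu < t2.nu ∧ ∃ u : Bool,
    F' = insert (merge u t1 t2) ((F.erase t1).erase t2)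

/-- The cover relation of the poset of pointed Lyndon forests `FLyn_n^•`. -/
def covFP {n : ℕ} (F F' : FLynP n) : Prop := covForest mergeP F.1 F'.1

/-- The cover relation of the poset of bicolored Lyndon forests `FLyn_n^w`. -/
def covFW {n : ℕ} (F F' : FLynW n) : Prop := covForest mergeW F.1 F'.1

/-- The forest of `n` isolated leaves. -/
def botForest (n : ℕ) : Finset BT := (Finset.Icc 1 n).image BT.leaf

theorem botForest_valid (n : ℕ) (P : BT → Prop) (hP : ∀ a, P (BT.leaf a)) :
    ForestValid n P (botForest n) := by
  refine ⟨?_, ?_, ?_⟩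
  · intro t ht
    obtain ⟨i, -, rfl⟩ := Finset.mem_image.1 ht
    exact ⟨trivial, hP i⟩
  · intro t ht t' ht' hne
    obtain ⟨i, -, rfl⟩ := Finset.mem_image.1 ht
    obtain ⟨j, -, rfl⟩ := Finset.mem_image.1 ht'
    have hij : i ≠ j := fun h => hne (by rw [h])
    simp only [BT.leaves]
    simp [Finset.disjoint_left, hij]
  · ext x
    simp [botForest, BT.leaves]

/-- The minimum of the poset of pointed Lyndon forests. -/
def botFP (n : ℕ) : FLynP n := ⟨botForest n, botForest_valid n _ fun _ => trivial⟩

/-- The minimum of the poset of bicolored Lyndon forests. -/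
def botFW (n : ℕ) : FLynW n := ⟨botForest n, botForest_valid n _ fun _ => trivial⟩

/-- The rank of a forest: its total number of internal vertices. -/
def rkForest (F : Finset BT) : ℕ := F.sum BT.internals

/-- The rank function of `FLyn_n^•`. -/
def rkFP {n : ℕ} (F : FLynP n) : ℕ := rkForest F.1

/-- The rank function of `FLyn_n^w`. -/
def rkFW {n : ℕ} (F : FLynW n) : ℕ := rkForest F.1

/-! ## The Whitney dual construction `R_λ(P)` -/

section RPoset

variable {α : Type*} {L : Type*}

/-- Swap the leftmost ascent of a word of labels. -/
noncomputable def swapFirstAscent (lt : L → L → Prop) : List L → List L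
  | a :: b :: rest => if lt a b then b :: a :: rest else a :: swapFirstAscent lt (b :: rest)
  | w => w

/-- Sort a word of labels by repeatedly swapping its leftmost ascent until it is
ascent-free. -/
noncomputable def sortWord (lt : L → L → Prop) (w : List L) : List L :=
  (swapFirstAscent lt)^[w.length * w.length] w

/-- The underlying set of the Whitney dual `R_λ(P)`: pairs `(x, w)` where `w` is the label
word of an ascent-free saturated chain from `0̂` to `x`. -/
abbrev RPoset (cov : α → α → Prop) (lab : α → α → L) (lt : L → L → Prop) (bot : α) : Type _ :=
  {q : α × List L //
    ∃ c, IsSatChain cov bot q.1 c ∧ AscFree lt (wordOf lab c) ∧ wordOf lab c = q.2}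

/-- The cover relation of `R_λ(P)`: `(x, w) ⋖ (y, u)` iff `x ⋖ y` and `u` is obtained by
sorting the label of `x ⋖ y` into `w`. -/
def covR (cov : α → α → Prop) (lab : α → α → L) (lt : L → L → Prop) (bot : α)
    (p q : RPoset cov lab lt bot) : Prop :=
  cov p.1.1 q.1.1 ∧ q.1.2 = sortWord lt (p.1.2 ++ [lab p.1.1 q.1.1])

end RPoset

/-! ## Reiner's poset of rooted spanning forests -/

/-- A rooted spanning forest on `[n]`, encoded by its parent function: `f i` is the parent
of the vertex `i` (`f i = i` for roots), vertices outside `[n]` being fixed, and every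
vertex reaching a root after finitely many steps (acyclicity). -/
def SFvalid (n : ℕ) (f : ℕ → ℕ) : Prop :=
  (∀ i ∈ Finset.Icc 1 n, f i ∈ Finset.Icc 1 n) ∧
  (∀ i, i ∉ Finset.Icc 1 n → f i = i) ∧
  (∀ i, ∃ k, f^[k + 1] i = f^[k] i)

/-- Reiner's poset `SF_n` of rooted spanning forests of the complete graph on `[n]`. -/
abbrev SF (n : ℕ) : Type := {f : ℕ → ℕ // SFvalid n f}

/-- The cover relation of `SF_n`: add an edge between the roots of two trees, one of the
two roots becoming the root of the merged tree. -/
def covSF {n : ℕ} (f g : SF n) : Prop :=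
  ∃ r1 ∈ Finset.Icc 1 n, ∃ r2 ∈ Finset.Icc 1 n, r1 ≠ r2 ∧
    f.1 r1 = r1 ∧ f.1 r2 = r2 ∧
    (g.1 = Function.update f.1 r1 r2 ∨ g.1 = Function.update f.1 r2 r1)

/-- The rank of a rooted spanning forest: its number of edges. -/
def rkSF {n : ℕ} (f : SF n) : ℕ := ((Finset.Icc 1 n).filter fun i => f.1 i ≠ i).card
/-! ## Further constructions used in particular statements -/

/-- The map `Φ` on underlying finsets: a pointed block `(B, q)` of a pointed partition
above `α` is sent to the set of minima of the `α`-blocks contained in `B`, pointed at the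
minimum of the `α`-block containing `q`. -/
noncomputable def PhiMap (af : Finset (Finset ℕ × ℕ)) (pf : Finset (Finset ℕ × ℕ)) :
    Finset (Finset ℕ × ℕ) :=
  pf.image fun b =>
    ((af.filter fun c => c.1 ⊆ b.1).image fun c => minB c.1,
     ((af.filter fun c => b.2 ∈ c.1).image fun c => minB c.1).min.untopD 0)

/-- The expected word of labels of the unique increasing maximal chain of the interval
`[0̂, [n]^p]` of the pointed partition poset:
`(1,2)¹ ⋯ (1,n)¹` if `p = 1`, and `(1,p)⁰ (1,2)¹ ⋯ (1,p-1)¹ (1,p+1)¹ ⋯ (1,n)¹` otherwise. -/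
def expectedWordP (n p : ℕ) : List (ℕ × ℕ × Bool) :=
  let base := (List.range (n - 1)).map fun i => ((1 : ℕ), i + 2, true)
  if p = 1 then base else ((1 : ℕ), p, false) :: base.erase (1, p, true)

/-- Merge two words of labels, each with non-increasing first components, into a single
word with non-increasing first components. -/
def mergeByNu : List (ℕ × ℕ × Bool) → List (ℕ × ℕ × Bool) → List (ℕ × ℕ × Bool)
  | [], ys => ys
  | xs, [] => xs
  | x :: xs, y :: ys =>
      if y.1 ≤ x.1 then x :: mergeByNu xs (y :: ys) else y :: mergeByNu (x :: xs) ys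
termination_by xs ys => xs.length + ys.length

/-- The word of labels of a tree read along the reverse-minimal linear extension of its
internal vertices: the internal vertex `v` contributes `(ν (L v), ν (R v), color v)`, the
vertices being listed with non-increasing valencies (descendants first among equal
valencies). -/
def BT.rmword : BT → List (ℕ × ℕ × Bool)
  | BT.leaf _ => []
  | BT.node c l r => mergeByNu l.rmword r.rmword ++ [(l.nu, r.nu, c)]

/-- The word of labels of the saturated chain `c(F)` associated to a forest `F`, read along
the reverse-minimal linear extension of the internal vertices of `F`. -/
noncomputable def forestWord (F : Finset BT) : List (ℕ × ℕ × Bool) :=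
  (F.toList.map BT.rmword).foldr mergeByNu []

/-- `TLyn_{n,p}^•`: pointed Lyndon trees on `[n]` whose associated chain ends at `[n]^p`,
i.e. whose tracked pointed element is `p`. -/
abbrev TLynBullet (n p : ℕ) : Type :=
  {T : BT // T.normalized ∧ T.pLyn ∧ T.leaves = Finset.Icc 1 n ∧ T.ppt = p}

/-- The labeling `λ̃` of `Πₙ•` proposed by Bellier-Millès, Delcroix-Oger and Hoffbeck:
the cover `u`-merging blocks with minima `a < b` in a pointed partition `π` with `|π|`
blocks is labeled `(b, a + n - |π|)` if `u = 0` and `(b, b + n - |π|)` if `u = 1`. -/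
noncomputable def labT (n : ℕ) {A : Finset ℕ} (π π' : PPart A) : ℕ × ℕ :=
  let olds := π.1 \ π'.1
  let mins := olds.image fun b => minB b.1
  let a := mins.min.untopD 0
  let b := mins.max.unbotD 0
  if ∃ c ∈ olds, minB c.1 = a ∧ ∃ d ∈ π'.1 \ π.1, d.2 = c.2
  then (b, b + n - π.1.card)
  else (b, a + n - π.1.card)

/-- The (strict) lexicographic order on `ℕ × ℕ`. -/
def ltT (x y : ℕ × ℕ) : Prop := x.1 < y.1 ∨ (x.1 = y.1 ∧ x.2 < y.2)


/-!
In the order dual a step down from `x` splits a block of `x` in two, and labels are compared in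
the dual of `Λₙ•`, so the lexicographically first chain of an interval `[y, x]` greedily takes the
largest label of `Λₙ•`. It splits the block `M` of `x` of largest minimum among those that are not
blocks of `y`: if possible it splits off the block of `y` of largest minimum that avoids both
`min M` and the point of `M` (colour `1`), and otherwise `M` is the union of just two blocks of `y`
and the split is forced. The EL property then follows by induction along chains from three
comparisons of labels: the greedy step beats every other first step, consecutive greedy steps
increase, and a non-greedy first step followed by the greedy one is never an ascent.
-/

section GreedyChains

variable {α : Type*} {cov : α → α → Prop}

theorem isSatChain_singleton (x : α) : IsSatChain cov x x [x] :=
  ⟨List.isChain_singleton x, rfl, rfl⟩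

theorem isSatChain_cons_cons_iff {x y z : α} {rest : List α} :
    IsSatChain cov x y (x :: z :: rest) ↔ cov x z ∧ IsSatChain cov z y (z :: rest) :=
  ⟨fun ⟨h, _, hy⟩ => ⟨(List.isChain_cons_cons.1 h).1, (List.isChain_cons_cons.1 h).2, rfl, hy⟩,
    fun ⟨hxz, h, _, hy⟩ => ⟨List.isChain_cons_cons.2 ⟨hxz, h⟩, rfl, hy⟩⟩

theorem IsSatChain.exists_eq_cons {x y : α} {c : List α} (h : IsSatChain cov x y c) :
    ∃ tail, c = x :: tail := by
  obtain ⟨_, hhead, _⟩ := h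
  cases c with
  | nil => simp at hhead
  | cons a tail => exact ⟨tail, by simpa using hhead⟩

theorem IsSatChain.exists_eq_cons_cons {x y : α} {c : List α} (h : IsSatChain cov x y c)
    (hne : x ≠ y) : ∃ z tail, c = x :: z :: tail := by
  obtain ⟨tail, rfl⟩ := h.exists_eq_cons
  cases tail with
  | nil => exact absurd (by simpa using h.2.2) hne
  | cons z tail => exact ⟨z, tail, rfl⟩

theorem IsSatChain.leOf {x y : α} {c : List α} (h : IsSatChain cov x y c) : leOf cov x y := by
  obtain ⟨tail, rfl⟩ := h.exists_eq_cons
  have hlast := h.2.2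
  rw [List.getLast?_eq_some_getLast (List.cons_ne_nil _ _)] at hlast
  exact List.relationReflTransGen_of_exists_isChain_cons tail h.1 (Option.some.inj hlast)

theorem leOf_eq_or_lt_of_rank {rk : α → ℕ} (hrk : ∀ a b, cov a b → rk b = rk a + 1)
    {a b : α} (h : leOf cov a b) : a = b ∨ rk a < rk b := by
  induction h with
  | refl => exact Or.inl rfl
  | tail _ hbc ih =>
    rw [hrk _ _ hbc]
    rcases ih with rfl | h <;> omega

theorem IsSatChain.eq_singleton_of_rank {rk : α → ℕ} (hrk : ∀ a b, cov a b → rk b = rk a + 1)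
    {x : α} {c : List α} (h : IsSatChain cov x x c) : c = [x] := by
  obtain ⟨tail, rfl⟩ := h.exists_eq_cons
  cases tail with
  | nil => rfl
  | cons z rest =>
    obtain ⟨hxz, hz⟩ := isSatChain_cons_cons_iff.1 h
    have := hrk _ _ hxz
    rcases leOf_eq_or_lt_of_rank hrk hz.leOf with rfl | _ <;> omega

end GreedyChains

section GreedyStep

variable {α L : Type*}

/-- `step y x z` chooses a first step `x ⋖ z` of the interval `[x, y]`; under these conditions the
chains made of chosen steps are the increasing, lexicographically first maximal chains. -/
structure IsGreedyStep (cov : α → α → Prop) (lab : α → α → L) (lt : L → L → Prop)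
    (rk : α → ℕ) (step : α → α → α → Prop) : Prop where
  rank_cov : ∀ a b, cov a b → rk b = rk a + 1
  exists_step : ∀ {x y}, leOf cov x y → x ≠ y → ∃ z, step y x z
  cov_of_step : ∀ {x y z}, leOf cov x y → step y x z → cov x z ∧ leOf cov z y
  lt_of_ne_step : ∀ {x y z w}, step y x z → cov x w → leOf cov w y → w ≠ z →
    lt (lab x z) (lab x w)
  lt_step_step : ∀ {x y z w}, step y x z → step y z w → lt (lab x z) (lab z w)
  not_lt_of_ne_step : ∀ {x y z w v}, step y x z → cov x w → leOf cov w y → w ≠ z →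
    step y w v → ¬ lt (lab x w) (lab w v)

namespace IsGreedyStep

variable {cov : α → α → Prop} {lab : α → α → L} {lt : L → L → Prop} {rk : α → ℕ}
  {step : α → α → α → Prop}

theorem exists_greedy (h : IsGreedyStep cov lab lt rk step) {x y : α} (hxy : leOf cov x y) :
    ∃ c, IsSatChain cov x y c ∧ c.IsChain (step y) := by
  induction hk : rk y - rk x generalizing x with
  | zero =>
    obtain rfl : x = y := by
      rcases leOf_eq_or_lt_of_rank h.rank_cov hxy with h | h
      · exact h
      · omega
    exact ⟨[x], isSatChain_singleton x, List.isChain_singleton x⟩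
  | succ k ih =>
    have hne : x ≠ y := by rintro rfl; omega
    obtain ⟨z, hz⟩ := h.exists_step hxy hne
    obtain ⟨hxz, hzy⟩ := h.cov_of_step hxy hz
    have := h.rank_cov _ _ hxz
    obtain ⟨c, hc, hcs⟩ := ih hzy (by omega)
    obtain ⟨tail, rfl⟩ := hc.exists_eq_cons
    exact ⟨x :: z :: tail, isSatChain_cons_cons_iff.2 ⟨hxz, hc⟩,
      List.isChain_cons_cons.2 ⟨hz, hcs⟩⟩

theorem incWord_of_greedy (h : IsGreedyStep cov lab lt rk step) {x y : α} {c : List α}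
    (hc : IsSatChain cov x y c) (hcs : c.IsChain (step y)) : IncWord lt (wordOf lab c) := by
  induction c generalizing x with
  | nil => exact List.isChain_nil
  | cons a rest ih =>
    obtain ⟨tail, hc'⟩ := hc.exists_eq_cons
    cases hc'
    match rest, hc, hcs with
    | [], _, _ => exact List.isChain_nil
    | [z], _, _ => exact List.isChain_singleton _
    | z :: w :: rest, hc, hcs =>
      obtain ⟨hxz, hz⟩ := isSatChain_cons_cons_iff.1 hc
      obtain ⟨hs, hzs⟩ := List.isChain_cons_cons.1 hcs
      exact List.isChain_cons_cons.2
        ⟨h.lt_step_step hs (List.isChain_cons_cons.1 hzs).1, ih hz hzs⟩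

theorem eq_of_cov (h : IsGreedyStep cov lab lt rk step) {x y z : α} (hxy : cov x y)
    (hxz : cov x z) (hzy : leOf cov z y) : z = y := by
  have := h.rank_cov _ _ hxy
  have := h.rank_cov _ _ hxz
  rcases leOf_eq_or_lt_of_rank h.rank_cov hzy with h | h
  · exact h
  · omega

theorem eq_of_incWord (h : IsGreedyStep cov lab lt rk step) {x y : α} {c c' : List α}
    (hc : IsSatChain cov x y c) (hcs : c.IsChain (step y)) (hc' : IsSatChain cov x y c')
    (hinc : IncWord lt (wordOf lab c')) : c' = c := by
  induction c' generalizing x c with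
  | nil => simp [IsSatChain] at hc'
  | cons a rest ih =>
    by_cases hxy : x = y
    · subst hxy
      rw [hc'.eq_singleton_of_rank h.rank_cov, hc.eq_singleton_of_rank h.rank_cov]
    obtain ⟨w, rest', he⟩ := hc'.exists_eq_cons_cons hxy
    obtain ⟨rfl, rfl⟩ := List.cons_eq_cons.1 he
    obtain ⟨z, tail, rfl⟩ := hc.exists_eq_cons_cons hxy
    obtain ⟨hxw, hw⟩ := isSatChain_cons_cons_iff.1 hc'
    obtain ⟨hxz, hz⟩ := isSatChain_cons_cons_iff.1 hc
    obtain ⟨hs, hzs⟩ := List.isChain_cons_cons.1 hcs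
    have hwinc : IncWord lt (wordOf lab (w :: rest')) := List.IsChain.tail hinc
    by_cases hwz : w = z
    · subst hwz
      rw [ih hz hzs hw hwinc]
    exfalso
    by_cases hwy : w = y
    · exact hwz (hwy.trans (h.eq_of_cov (hwy ▸ hxw) hxz hz.leOf).symm)
    obtain ⟨c₀, hc₀, hc₀s⟩ := h.exists_greedy hw.leOf
    obtain ⟨v, rest, rfl⟩ := hc₀.exists_eq_cons_cons hwy
    obtain rfl := (List.cons_eq_cons.1 (ih hc₀ hc₀s hw hwinc)).2
    exact h.not_lt_of_ne_step hs hxw hw.leOf hwz (List.isChain_cons_cons.1 hc₀s).1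
      (List.isChain_cons_cons.1 hinc).1

theorem lex_of_greedy (h : IsGreedyStep cov lab lt rk step) {x y : α} {c c' : List α}
    (hc : IsSatChain cov x y c) (hcs : c.IsChain (step y)) (hc' : IsSatChain cov x y c')
    (hne : c' ≠ c) : List.Lex lt (wordOf lab c) (wordOf lab c') := by
  induction c' generalizing x c with
  | nil => simp [IsSatChain] at hc'
  | cons a rest ih =>
    by_cases hxy : x = y
    · subst hxy
      rw [hc'.eq_singleton_of_rank h.rank_cov, hc.eq_singleton_of_rank h.rank_cov] at hne
      exact absurd rfl hne
    obtain ⟨w, rest', he⟩ := hc'.exists_eq_cons_cons hxy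
    obtain ⟨rfl, rfl⟩ := List.cons_eq_cons.1 he
    obtain ⟨z, tail, rfl⟩ := hc.exists_eq_cons_cons hxy
    obtain ⟨hxw, hw⟩ := isSatChain_cons_cons_iff.1 hc'
    obtain ⟨hxz, hz⟩ := isSatChain_cons_cons_iff.1 hc
    obtain ⟨hs, hzs⟩ := List.isChain_cons_cons.1 hcs
    by_cases hwz : w = z
    · subst hwz
      exact List.Lex.cons (ih hz hzs hw fun he => hne (by rw [he]))
    · exact List.Lex.rel (h.lt_of_ne_step hs hxw hw.leOf hwz)

theorem isELLabeling (h : IsGreedyStep cov lab lt rk step) : IsELLabeling cov lab lt := by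
  intro x y hxy
  obtain ⟨c, hc, hcs⟩ := h.exists_greedy hxy
  exact ⟨c, ⟨hc, h.incWord_of_greedy hc hcs⟩, fun c' hc' hne =>
    ⟨fun hinc => hne (h.eq_of_incWord hc hcs hc' hinc), h.lex_of_greedy hc hcs hc' hne⟩⟩

end IsGreedyStep

end GreedyStep

section Blocks

theorem minB_mem {B : Finset ℕ} (h : B.Nonempty) : minB B ∈ B := by
  obtain ⟨m, hm⟩ := Finset.min_of_nonempty h
  rw [minB, hm]
  exact Finset.mem_of_min hm

theorem minB_le {B : Finset ℕ} {i : ℕ} (hi : i ∈ B) : minB B ≤ i := by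
  obtain ⟨m, hm⟩ := Finset.min_of_nonempty ⟨i, hi⟩
  have := Finset.min_le hi
  rw [hm] at this
  rw [minB, hm]
  exact_mod_cast this

theorem minB_mono {B C : Finset ℕ} (hB : B.Nonempty) (h : B ⊆ C) : minB C ≤ minB B :=
  minB_le (h (minB_mem hB))

theorem minB_sdiff {B C : Finset ℕ} (h : minB B ∈ B) (hC : minB B ∉ C) :
    minB (B \ C) = minB B :=
  le_antisymm (minB_le (Finset.mem_sdiff.2 ⟨h, hC⟩))
    (minB_mono ⟨_, Finset.mem_sdiff.2 ⟨h, hC⟩⟩ Finset.sdiff_subset)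

theorem minB_lt_of_subset {B C : Finset ℕ} (hC : C.Nonempty) (h : C ⊆ B) (hB : minB B ∉ C) :
    minB B < minB C :=
  lt_of_le_of_ne (minB_mono hC h) fun he => hB (he ▸ minB_mem hC)

variable {A : Finset ℕ} {π : PPart A} {b b' : Finset ℕ × ℕ}

theorem PPart.pt_mem (hb : b ∈ π.1) : b.2 ∈ b.1 := π.2.1 b hb

theorem PPart.nonempty (hb : b ∈ π.1) : b.1.Nonempty := ⟨b.2, PPart.pt_mem hb⟩

theorem PPart.minB_mem (hb : b ∈ π.1) : minB b.1 ∈ b.1 := _root_.minB_mem (PPart.nonempty hb)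

theorem PPart.disjoint (hb : b ∈ π.1) (hb' : b' ∈ π.1) (h : b ≠ b') : Disjoint b.1 b'.1 :=
  π.2.2.1 b hb b' hb' h

theorem PPart.eq_of_mem_of_mem (hb : b ∈ π.1) (hb' : b' ∈ π.1) {i : ℕ} (h : i ∈ b.1)
    (h' : i ∈ b'.1) : b = b' := by
  by_contra hne
  exact Finset.disjoint_left.1 (PPart.disjoint hb hb' hne) h h'

theorem PPart.eq_of_subset (hb : b ∈ π.1) (hb' : b' ∈ π.1) (h : b.1 ⊆ b'.1) : b = b' :=
  PPart.eq_of_mem_of_mem hb hb' (PPart.pt_mem hb) (h (PPart.pt_mem hb))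

theorem PPart.eq_of_minB_eq (hb : b ∈ π.1) (hb' : b' ∈ π.1) (h : minB b.1 = minB b'.1) :
    b = b' :=
  PPart.eq_of_mem_of_mem hb hb' (PPart.minB_mem hb) (h ▸ PPart.minB_mem hb')

theorem PPart.subset (hb : b ∈ π.1) : b.1 ⊆ A := fun _ hi =>
  π.2.2.2 ▸ Finset.mem_biUnion.2 ⟨b, hb, hi⟩

theorem PPart.exists_mem (π : PPart A) {i : ℕ} (hi : i ∈ A) : ∃ b ∈ π.1, i ∈ b.1 := by
  rw [← π.2.2.2] at hi
  simpa using Finset.mem_biUnion.1 hi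

theorem PPart.eq_of_subset_blocks {π ρ : PPart A} (h : π.1 ⊆ ρ.1) : π = ρ := by
  refine Subtype.ext (Finset.Subset.antisymm h fun c hc => ?_)
  obtain ⟨b, hb, hcb⟩ := π.exists_mem (PPart.subset hc (PPart.pt_mem hc))
  rwa [PPart.eq_of_mem_of_mem hc (h hb) (PPart.pt_mem hc) hcb]

theorem PPart.eq_or_eq_of_subset_union {c : Finset ℕ × ℕ} (hb : b ∈ π.1)
    (hb' : b' ∈ π.1) (hc : c ∈ π.1) (h : c.1 ⊆ b.1 ∪ b'.1) : c = b ∨ c = b' :=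
  (Finset.mem_union.1 (h (PPart.minB_mem hc))).imp
    (PPart.eq_of_mem_of_mem hc hb (PPart.minB_mem hc))
    (PPart.eq_of_mem_of_mem hc hb' (PPart.minB_mem hc))

end Blocks

section Split

variable {A : Finset ℕ}

def splitBlocks (s : Finset (Finset ℕ × ℕ)) (M D : Finset ℕ × ℕ) (p : ℕ) :
    Finset (Finset ℕ × ℕ) :=
  insert (M.1 \ D.1, p) (insert D (s.erase M))

/-- The cover `z ⋖ x` of `Πₙ•` merging `D` with `(M.1 \ D.1, p)`, the part of `M` containing
`min M`. -/
structure IsSplit (x z : PPart A) (M D : Finset ℕ × ℕ) (p : ℕ) : Prop where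
  mem : M ∈ x.1
  subset : D.1 ⊆ M.1
  minB_not_mem : minB M.1 ∉ D.1
  pt_eq : M.2 = p ∨ M.2 = D.2
  blocks_eq : z.1 = splitBlocks x.1 M D p

namespace IsSplit

variable {x z : PPart A} {M D : Finset ℕ × ℕ} {p : ℕ}

theorem left_mem (h : IsSplit x z M D p) : (M.1 \ D.1, p) ∈ z.1 :=
  h.blocks_eq ▸ Finset.mem_insert_self _ _

theorem right_mem (h : IsSplit x z M D p) : D ∈ z.1 :=
  h.blocks_eq ▸ Finset.mem_insert_of_mem (Finset.mem_insert_self _ _)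

theorem mem_of_mem {b : Finset ℕ × ℕ} (h : IsSplit x z M D p) (hb : b ∈ x.1) (hbM : b ≠ M) :
    b ∈ z.1 :=
  h.blocks_eq ▸ Finset.mem_insert_of_mem (Finset.mem_insert_of_mem (Finset.mem_erase.2 ⟨hbM, hb⟩))

theorem mem_cases {b : Finset ℕ × ℕ} (h : IsSplit x z M D p) (hb : b ∈ z.1) :
    b = (M.1 \ D.1, p) ∨ b = D ∨ (b ∈ x.1 ∧ b ≠ M) := by
  rw [h.blocks_eq, splitBlocks] at hb
  simp only [Finset.mem_insert, Finset.mem_erase] at hb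
  tauto

theorem minB_mem_left (h : IsSplit x z M D p) : minB M.1 ∈ M.1 \ D.1 :=
  Finset.mem_sdiff.2 ⟨PPart.minB_mem h.mem, h.minB_not_mem⟩

theorem minB_left (h : IsSplit x z M D p) : minB (M.1 \ D.1) = minB M.1 :=
  minB_sdiff (PPart.minB_mem h.mem) h.minB_not_mem

theorem minB_lt (h : IsSplit x z M D p) : minB M.1 < minB D.1 :=
  minB_lt_of_subset (PPart.nonempty h.right_mem) h.subset h.minB_not_mem

theorem right_ne (h : IsSplit x z M D p) : D ≠ M := fun he =>
  h.minB_not_mem (by rw [he]; exact PPart.minB_mem h.mem)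

theorem left_ne (h : IsSplit x z M D p) : (M.1 \ D.1, p) ≠ M := fun he => by
  have hD := PPart.minB_mem h.right_mem
  have hM : M.1 \ D.1 = M.1 := congrArg Prod.fst he
  have : minB D.1 ∈ M.1 \ D.1 := by rw [hM]; exact h.subset hD
  exact (Finset.mem_sdiff.1 this).2 hD

theorem left_ne_right (h : IsSplit x z M D p) : (M.1 \ D.1, p) ≠ D := fun he =>
  h.minB_not_mem (congrArg Prod.fst he ▸ h.minB_mem_left)

theorem right_not_mem (h : IsSplit x z M D p) : D ∉ x.1 := fun hD =>
  h.right_ne (PPart.eq_of_subset hD h.mem h.subset)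

theorem left_not_mem (h : IsSplit x z M D p) : (M.1 \ D.1, p) ∉ x.1 := fun hL =>
  h.left_ne (PPart.eq_of_mem_of_mem hL h.mem h.minB_mem_left (PPart.minB_mem h.mem))

theorem not_mem (h : IsSplit x z M D p) : M ∉ z.1 := fun hM => by
  rcases h.mem_cases hM with he | he | ⟨-, he⟩
  exacts [h.left_ne he.symm, h.right_ne he.symm, he rfl]

theorem eq {z' : PPart A} (h : IsSplit x z M D p) (h' : IsSplit x z' M D p) : z = z' :=
  Subtype.ext (h.blocks_eq.trans h'.blocks_eq.symm)

theorem card (h : IsSplit x z M D p) : z.1.card = x.1.card + 1 := by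
  have hD : D ∉ x.1.erase M := fun hD => h.right_not_mem (Finset.mem_of_mem_erase hD)
  have hL : (M.1 \ D.1, p) ∉ insert D (x.1.erase M) := by
    rw [Finset.mem_insert, not_or]
    exact ⟨h.left_ne_right, fun hL => h.left_not_mem (Finset.mem_of_mem_erase hL)⟩
  have := Finset.card_pos.2 ⟨M, h.mem⟩
  rw [h.blocks_eq, splitBlocks, Finset.card_insert_of_notMem hL, Finset.card_insert_of_notMem hD,
    Finset.card_erase_of_mem h.mem]
  omega

theorem covPP (h : IsSplit x z M D p) : covPP z x := by
  refine ⟨(M.1 \ D.1, p), h.left_mem, D, h.right_mem, h.minB_left ▸ h.minB_lt, M.2,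
    h.pt_eq.imp id id, ?_⟩
  have hL : (M.1 \ D.1, p) ∉ insert D (x.1.erase M) := by
    rw [Finset.mem_insert, not_or]
    exact ⟨h.left_ne_right, fun hL => h.left_not_mem (Finset.mem_of_mem_erase hL)⟩
  rw [h.blocks_eq, splitBlocks, Finset.erase_insert hL,
    Finset.erase_insert fun hD => h.right_not_mem (Finset.mem_of_mem_erase hD),
    Finset.sdiff_union_of_subset h.subset, Prod.mk.eta, Finset.insert_erase h.mem]

theorem labPP_eq (h : IsSplit x z M D p) : labPP z x = (minB M.1, minB D.1, decide (M.2 = p)) := by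
  have holds : z.1 \ x.1 = {(M.1 \ D.1, p), D} := by
    ext b
    simp only [Finset.mem_sdiff, Finset.mem_insert, Finset.mem_singleton]
    constructor
    · rintro ⟨hbz, hbx⟩
      rcases h.mem_cases hbz with hb | hb | hb
      exacts [Or.inl hb, Or.inr hb, absurd hb.1 hbx]
    · rintro (rfl | rfl)
      exacts [⟨h.left_mem, h.left_not_mem⟩, ⟨h.right_mem, h.right_not_mem⟩]
  have hnews : x.1 \ z.1 = {M} := by
    ext b
    simp only [Finset.mem_sdiff, Finset.mem_singleton]
    refine ⟨fun ⟨hbx, hbz⟩ => by_contra fun hbM => hbz (h.mem_of_mem hbx hbM), ?_⟩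
    rintro rfl
    exact ⟨h.mem, h.not_mem⟩
  have hmins : (z.1 \ x.1).image (fun b => minB b.1) = {minB M.1, minB D.1} := by
    rw [holds, Finset.image_insert, Finset.image_singleton, h.minB_left]
  have hlt := h.minB_lt
  have hmin : ({minB M.1, minB D.1} : Finset ℕ).min.untopD 0 = minB M.1 := by
    rw [Finset.min_insert, Finset.min_singleton, ← WithTop.coe_min, min_eq_left hlt.le,
      WithTop.untopD_coe]
  have hmax : ({minB M.1, minB D.1} : Finset ℕ).max.unbotD 0 = minB D.1 := by
    rw [Finset.max_insert, Finset.max_singleton, ← WithBot.coe_max, max_eq_right hlt.le,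
      WithBot.unbotD_coe]
  simp only [labPP, hmins, hmin, hmax]
  simp only [holds, hnews, Finset.mem_insert, Finset.mem_singleton, exists_eq_left,
    exists_eq_or_imp, h.minB_left, hlt.ne']
  simp [eq_comm]

end IsSplit

variable {x z : PPart A}

theorem covPP.exists_isSplit (h : covPP z x) : ∃ M D p, IsSplit x z M D p := by
  obtain ⟨b₁, hb₁, b₂, hb₂, hlt, q, hq, hx⟩ := h
  have hne : b₁ ≠ b₂ := fun he => hlt.ne (by rw [he])
  have hdisj := PPart.disjoint hb₁ hb₂ hne
  have hM : (b₁.1 ∪ b₂.1, q) ∈ x.1 := hx ▸ Finset.mem_insert_self _ _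
  have hMz : (b₁.1 ∪ b₂.1, q) ∉ (z.1.erase b₁).erase b₂ := fun hMz => by
    have hMb₁ : (b₁.1 ∪ b₂.1, q) = b₁ := PPart.eq_of_mem_of_mem
      (Finset.mem_of_mem_erase (Finset.mem_of_mem_erase hMz)) hb₁
      (Finset.mem_union_left _ (PPart.pt_mem hb₁)) (PPart.pt_mem hb₁)
    exact Finset.disjoint_left.1 hdisj
      ((congrArg Prod.fst hMb₁) ▸ Finset.mem_union_right _ (PPart.pt_mem hb₂)) (PPart.pt_mem hb₂)
  refine ⟨(b₁.1 ∪ b₂.1, q), b₂, b₁.2, ⟨hM, Finset.subset_union_right, fun hmin => ?_,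
    hq.imp id id, ?_⟩⟩
  · have h₁ : minB (b₁.1 ∪ b₂.1) ≤ minB b₁.1 :=
      minB_mono (PPart.nonempty hb₁) Finset.subset_union_left
    exact absurd (hlt.trans_le ((minB_le hmin).trans h₁)) (lt_irrefl _)
  · rw [splitBlocks, hx, Finset.erase_insert hMz, Finset.union_sdiff_right,
      Finset.sdiff_eq_self_of_disjoint hdisj, Prod.mk.eta,
      Finset.insert_erase (Finset.mem_erase.2 ⟨hne.symm, hb₂⟩), Finset.insert_erase hb₁]

theorem exists_parent_of_mem_splitBlocks {M D b : Finset ℕ × ℕ} {p : ℕ} (hM : M ∈ x.1)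
    (hD : D.1 ⊆ M.1) (hb : b ∈ splitBlocks x.1 M D p) : ∃ c ∈ x.1, b.1 ⊆ c.1 ∧
      ((c = M ∧ (b = (M.1 \ D.1, p) ∨ b = D)) ∨ (c ≠ M ∧ b = c)) := by
  simp only [splitBlocks, Finset.mem_insert, Finset.mem_erase] at hb
  rcases hb with rfl | rfl | ⟨hbM, hb⟩
  exacts [⟨M, hM, Finset.sdiff_subset, Or.inl ⟨rfl, Or.inl rfl⟩⟩,
    ⟨M, hM, hD, Or.inl ⟨rfl, Or.inr rfl⟩⟩, ⟨b, hb, subset_rfl, Or.inr ⟨hbM, rfl⟩⟩]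

theorem disjoint_of_mem_splitBlocks {M D b b' : Finset ℕ × ℕ} {p : ℕ} (hM : M ∈ x.1)
    (hD : D.1 ⊆ M.1) (hb : b ∈ splitBlocks x.1 M D p) (hb' : b' ∈ splitBlocks x.1 M D p)
    (hne : b ≠ b') : Disjoint b.1 b'.1 := by
  rw [Finset.disjoint_left]
  intro i hib hib'
  obtain ⟨c, hc, hbc, hcb⟩ := exists_parent_of_mem_splitBlocks hM hD hb
  obtain ⟨c', hc', hbc', hcb'⟩ := exists_parent_of_mem_splitBlocks hM hD hb'
  obtain rfl := PPart.eq_of_mem_of_mem hc hc' (hbc hib) (hbc' hib')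
  rcases hcb with ⟨rfl, rfl | rfl⟩ | ⟨hcM, rfl⟩ <;>
    rcases hcb' with ⟨hcM', rfl | rfl⟩ | ⟨hcM', rfl⟩
  all_goals first
    | exact hne rfl
    | exact hcM' rfl
    | exact hcM hcM'
    | exact (Finset.mem_sdiff.1 hib).2 hib'
    | exact (Finset.mem_sdiff.1 hib').2 hib

theorem biUnion_splitBlocks {M D : Finset ℕ × ℕ} {p : ℕ} (hM : M ∈ x.1) (hD : D.1 ⊆ M.1) :
    (splitBlocks x.1 M D p).biUnion Prod.fst = A := by
  ext i
  simp only [Finset.mem_biUnion]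
  constructor
  · rintro ⟨b, hb, hib⟩
    obtain ⟨c, hc, hbc, -⟩ := exists_parent_of_mem_splitBlocks hM hD hb
    exact PPart.subset hc (hbc hib)
  · intro hi
    obtain ⟨b, hb, hib⟩ := x.exists_mem hi
    by_cases hbM : b = M
    · subst hbM
      by_cases hiD : i ∈ D.1
      · exact ⟨D, by simp [splitBlocks], hiD⟩
      · exact ⟨(b.1 \ D.1, p), by simp [splitBlocks], Finset.mem_sdiff.2 ⟨hib, hiD⟩⟩
    · exact ⟨b, by simp [splitBlocks, hbM, hb], hib⟩

theorem exists_isSplit {M D : Finset ℕ × ℕ} {p : ℕ} (hM : M ∈ x.1) (hD : D.1 ⊆ M.1)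
    (hDpt : D.2 ∈ D.1) (hmin : minB M.1 ∉ D.1) (hp : p ∈ M.1 \ D.1) (hpt : M.2 = p ∨ M.2 = D.2) :
    ∃ z : PPart A, IsSplit x z M D p := by
  refine ⟨⟨splitBlocks x.1 M D p, fun b hb => ?_,
    fun b hb b' hb' => disjoint_of_mem_splitBlocks hM hD hb hb', biUnion_splitBlocks hM hD⟩,
    hM, hD, hmin, hpt, rfl⟩
  simp only [splitBlocks, Finset.mem_insert, Finset.mem_erase] at hb
  rcases hb with rfl | rfl | ⟨-, hb⟩
  exacts [hp, hDpt, PPart.pt_mem hb]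

end Split

section Refines

variable {A : Finset ℕ}

/-- The order `y ≤ x` of `Πₙ•`. -/
def Refines (y x : PPart A) : Prop :=
  ∀ b ∈ x.1, (∀ c ∈ y.1, c.1 ⊆ b.1 ∨ Disjoint c.1 b.1) ∧ ∃ c ∈ y.1, c.1 ⊆ b.1 ∧ c.2 = b.2

namespace Refines

variable {y x : PPart A} {b c d : Finset ℕ × ℕ} {i : ℕ}

theorem refl (y : PPart A) : Refines y y := fun b hb =>
  ⟨fun c hc => (eq_or_ne c b).imp (fun h => by rw [h]) (PPart.disjoint hc hb),
    b, hb, subset_rfl, rfl⟩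

theorem subset_of_mem (h : Refines y x) (hb : b ∈ x.1) (hc : c ∈ y.1) (hib : i ∈ b.1)
    (hic : i ∈ c.1) : c.1 ⊆ b.1 :=
  ((h b hb).1 c hc).resolve_right fun hd => Finset.disjoint_left.1 hd hic hib

theorem exists_subset (h : Refines y x) (hb : b ∈ x.1) (hi : i ∈ b.1) :
    ∃ c ∈ y.1, c.1 ⊆ b.1 ∧ i ∈ c.1 := by
  obtain ⟨c, hc, hic⟩ := y.exists_mem (PPart.subset hb hi)
  exact ⟨c, hc, h.subset_of_mem hb hc hi hic, hic⟩

theorem eq_of_forall_eq (h : Refines y x) (hb : b ∈ x.1) (hd : d ∈ y.1)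
    (hall : ∀ c ∈ y.1, c.1 ⊆ b.1 → c = d) : b = d := by
  obtain ⟨c₀, hc₀, hc₀b, hpt⟩ := (h b hb).2
  obtain rfl := hall c₀ hc₀ hc₀b
  refine Prod.ext (Finset.Subset.antisymm (fun i hi => ?_) hc₀b) hpt.symm
  obtain ⟨c, hc, hcb, hic⟩ := h.exists_subset hb hi
  exact hall c hc hcb ▸ hic

theorem card_le (h : Refines y x) : x.1.card ≤ y.1.card :=
  Finset.card_le_card_of_forall_subsingleton (fun b c => c.2 = b.2)
    (fun b hb => by obtain ⟨c, hc, -, hpt⟩ := (h b hb).2; exact ⟨c, hc, hpt⟩)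
    fun _ _ _ hb _ hb' => PPart.eq_of_mem_of_mem hb.1 hb'.1 (hb.2 ▸ PPart.pt_mem hb.1)
      (hb'.2 ▸ PPart.pt_mem hb'.1)

end Refines

namespace IsSplit

variable {y x z : PPart A} {M D : Finset ℕ × ℕ} {p : ℕ}

theorem refines_of_refines (hs : IsSplit x z M D p) (h : Refines y z) : Refines y x := by
  intro b hb
  by_cases hbM : b = M
  · subst hbM
    refine ⟨fun c hc => ?_, ?_⟩
    · rcases (h _ hs.left_mem).1 c hc with hL | hL
      · exact Or.inl (hL.trans Finset.sdiff_subset)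
      rcases (h _ hs.right_mem).1 c hc with hD | hD
      · exact Or.inl (hD.trans hs.subset)
      · right
        rw [← Finset.sdiff_union_of_subset hs.subset]
        exact Finset.disjoint_union_right.2 ⟨hL, hD⟩
    · rcases hs.pt_eq with hpt | hpt
      · obtain ⟨c, hc, hcL, hcpt⟩ := (h _ hs.left_mem).2
        exact ⟨c, hc, hcL.trans Finset.sdiff_subset, hcpt.trans hpt.symm⟩
      · obtain ⟨c, hc, hcD, hcpt⟩ := (h _ hs.right_mem).2
        exact ⟨c, hc, hcD.trans hs.subset, hcpt.trans hpt.symm⟩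
  · exact h b (hs.mem_of_mem hb hbM)

theorem refines (hs : IsSplit x z M D p) (h : Refines y x) (hD : D ∈ y.1)
    (hL : ∃ c ∈ y.1, c.1 ⊆ M.1 \ D.1 ∧ c.2 = p) : Refines y z := by
  have hsat : ∀ c ∈ y.1, c ≠ D → c.1 ⊆ M.1 ∨ Disjoint c.1 M.1 →
      c.1 ⊆ M.1 \ D.1 ∨ Disjoint c.1 (M.1 \ D.1) := fun c hc hcD hcM =>
    hcM.imp (fun hcM => Finset.subset_sdiff.2 ⟨hcM, PPart.disjoint hc hD hcD⟩)
      fun hcM => hcM.mono_right Finset.sdiff_subset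
  intro b hb
  rcases hs.mem_cases hb with rfl | rfl | ⟨hbx, -⟩
  · refine ⟨fun c hc => ?_, hL⟩
    rcases eq_or_ne c D with rfl | hcD
    · exact Or.inr Finset.sdiff_disjoint.symm
    · exact hsat c hc hcD ((h M hs.mem).1 c hc)
  · exact ⟨fun c hc => (eq_or_ne c b).imp (fun he => by rw [he]) (PPart.disjoint hc hD),
      b, hD, subset_rfl, rfl⟩
  · exact h b hbx

theorem not_mem_of_refines (hs : IsSplit x z M D p) (h : Refines y z) : M ∉ y.1 := fun hM => by
  obtain ⟨c, hc, hcL, -⟩ := (h _ hs.left_mem).2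
  obtain rfl := PPart.eq_of_subset hc hM (hcL.trans Finset.sdiff_subset)
  have hD := PPart.minB_mem hs.right_mem
  exact (Finset.mem_sdiff.1 (hcL (hs.subset hD))).2 hD

end IsSplit

end Refines

section CanonicalStep

variable {A : Finset ℕ}

def IsTopBlock (y x : PPart A) (M : Finset ℕ × ℕ) : Prop :=
  M ∈ x.1 ∧ M ∉ y.1 ∧ ∀ b ∈ x.1, b ∉ y.1 → minB b.1 ≤ minB M.1

/-- Splitting a free block `c` off `M` leaves the point of `M` on the side of `min M`, so the
label of the split has colour `1`. -/
def IsFreeBlock (y : PPart A) (M c : Finset ℕ × ℕ) : Prop :=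
  c ∈ y.1 ∧ c.1 ⊆ M.1 ∧ minB M.1 ∉ c.1 ∧ M.2 ∉ c.1

/-- The first step below `x` of the lexicographically first maximal chain of `[y, x]`: it greedily
takes the largest label of `Λₙ•`. -/
def CanStep (y x z : PPart A) : Prop :=
  ∃ M D p, IsTopBlock y x M ∧ IsSplit x z M D p ∧
    ((p = M.2 ∧ IsFreeBlock y M D ∧ ∀ c, IsFreeBlock y M c → minB c.1 ≤ minB D.1) ∨
     ((∀ c, ¬ IsFreeBlock y M c) ∧ D ∈ y.1 ∧ D.2 = M.2 ∧ (M.1 \ D.1, p) ∈ y.1))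

variable {y x z : PPart A} {M T : Finset ℕ × ℕ}

theorem IsTopBlock.lt_or_eq (hT : IsTopBlock y x T) (hM : M ∈ x.1) (hMy : M ∉ y.1) :
    minB M.1 < minB T.1 ∨ M = T :=
  (hT.2.2 M hM hMy).lt_or_eq.imp_right (PPart.eq_of_minB_eq hM hT.1)

theorem eq_or_eq_of_forall_not_isFreeBlock (hfree : ∀ c, ¬ IsFreeBlock y M c)
    {B C c : Finset ℕ × ℕ} (hB : B ∈ y.1) (hminB : minB M.1 ∈ B.1) (hC : C ∈ y.1)
    (hpt : M.2 ∈ C.1) (hc : c ∈ y.1) (hcM : c.1 ⊆ M.1) : c = B ∨ c = C := by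
  by_cases hmin : minB M.1 ∈ c.1
  · exact Or.inl (PPart.eq_of_mem_of_mem hc hB hmin hminB)
  by_cases hcpt : M.2 ∈ c.1
  · exact Or.inr (PPart.eq_of_mem_of_mem hc hC hcpt hpt)
  exact absurd ⟨hc, hcM, hmin, hcpt⟩ (hfree c)

theorem CanStep.refines (hr : Refines y x) (h : CanStep y x z) : Refines y z := by
  obtain ⟨M, D, p, hM, hs, ⟨rfl, hD, -⟩ | ⟨-, hDy, -, hL⟩⟩ := h
  · obtain ⟨c, hc, hcM, hcpt⟩ := (hr M hs.mem).2
    have hcD : c ≠ D := fun he => hD.2.2.2 (he ▸ hcpt ▸ PPart.pt_mem hc)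
    exact hs.refines hr hD.1
      ⟨c, hc, Finset.subset_sdiff.2 ⟨hcM, PPart.disjoint hc hD.1 hcD⟩, hcpt⟩
  · exact hs.refines hr hDy ⟨_, hL, subset_rfl, rfl⟩

theorem exists_isTopBlock (hne : x ≠ y) : ∃ M, IsTopBlock y x M := by
  have hS : (x.1.filter (· ∉ y.1)).Nonempty := by
    by_contra hS
    simp only [Finset.not_nonempty_iff_eq_empty, Finset.filter_eq_empty_iff, not_not] at hS
    exact hne (PPart.eq_of_subset_blocks hS)
  obtain ⟨M, hMS, hmax⟩ := Finset.exists_max_image _ (fun b => minB b.1) hS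
  rw [Finset.mem_filter] at hMS
  exact ⟨M, hMS.1, hMS.2, fun b hb hby => hmax b (Finset.mem_filter.2 ⟨hb, hby⟩)⟩

theorem exists_canStep_of_isFreeBlock {c : Finset ℕ × ℕ} (hM : IsTopBlock y x M)
    (hc : IsFreeBlock y M c) : ∃ z, CanStep y x z := by
  obtain ⟨D, hDS, hmax⟩ := Finset.exists_max_image (y.1.filter (IsFreeBlock y M))
    (fun b => minB b.1) ⟨c, Finset.mem_filter.2 ⟨hc.1, hc⟩⟩
  have hD : IsFreeBlock y M D := (Finset.mem_filter.1 hDS).2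
  obtain ⟨z, hz⟩ := exists_isSplit hM.1 hD.2.1 (PPart.pt_mem hD.1) hD.2.2.1
    (Finset.mem_sdiff.2 ⟨PPart.pt_mem hM.1, hD.2.2.2⟩) (Or.inl rfl)
  exact ⟨z, M, D, M.2, hM, hz,
    Or.inl ⟨rfl, hD, fun c hc => hmax c (Finset.mem_filter.2 ⟨hc.1, hc⟩)⟩⟩

theorem exists_canStep_of_forall_not_isFreeBlock (hr : Refines y x)
    (hM : IsTopBlock y x M) (hfree : ∀ c, ¬ IsFreeBlock y M c) : ∃ z, CanStep y x z := by
  obtain ⟨C, hC, hCM, hCpt⟩ := (hr M hM.1).2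
  obtain ⟨B, hB, hBM, hminB⟩ := hr.exists_subset hM.1 (PPart.minB_mem hM.1)
  have hpt : M.2 ∈ C.1 := hCpt ▸ PPart.pt_mem hC
  have hcases : ∀ c ∈ y.1, c.1 ⊆ M.1 → c = B ∨ c = C := fun c hc hcM =>
    eq_or_eq_of_forall_not_isFreeBlock hfree hB hminB hC hpt hc hcM
  have hmin : minB M.1 ∉ C.1 := fun hmin => by
    have hCB := PPart.eq_of_mem_of_mem hC hB hmin hminB
    have hMC := hr.eq_of_forall_eq hM.1 hC fun c hc hcM =>
      (hcases c hc hcM).elim (fun h => h.trans hCB.symm) id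
    exact hM.2.1 (hMC ▸ hC)
  have hBC : B ≠ C := fun he => hmin (he ▸ hminB)
  have hL : M.1 \ C.1 = B.1 := by
    refine Finset.Subset.antisymm (fun i hi => ?_)
      (Finset.subset_sdiff.2 ⟨hBM, PPart.disjoint hB hC hBC⟩)
    obtain ⟨c, hc, hcM, hic⟩ := hr.exists_subset hM.1 (Finset.mem_sdiff.1 hi).1
    rcases hcases c hc hcM with rfl | rfl
    exacts [hic, absurd hic (Finset.mem_sdiff.1 hi).2]
  obtain ⟨z, hz⟩ := exists_isSplit hM.1 hCM (PPart.pt_mem hC) hmin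
    (hL ▸ PPart.pt_mem hB) (Or.inr hCpt.symm)
  exact ⟨z, M, C, B.2, hM, hz, Or.inr ⟨hfree, hC, hCpt, by rw [hL]; exact hB⟩⟩

theorem exists_canStep (hr : Refines y x) (hne : x ≠ y) : ∃ z, CanStep y x z := by
  obtain ⟨M, hM⟩ := exists_isTopBlock hne
  by_cases hfree : ∃ c, IsFreeBlock y M c
  · obtain ⟨c, hc⟩ := hfree
    exact exists_canStep_of_isFreeBlock hM hc
  · exact exists_canStep_of_forall_not_isFreeBlock hr hM (not_exists.1 hfree)

theorem leOf_covPP_iff : leOf (fun a b : PPart A => covPP b a) x y ↔ Refines y x := by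
  constructor
  · intro h
    induction h using Relation.ReflTransGen.head_induction_on with
    | refl => exact Refines.refl y
    | head hab _ ih =>
      obtain ⟨M, D, p, hs⟩ := hab.exists_isSplit
      exact hs.refines_of_refines ih
  · intro h
    induction hk : y.1.card - x.1.card using Nat.strong_induction_on generalizing x with
    | _ k ih =>
      by_cases hxy : x = y
      · exact hxy ▸ Relation.ReflTransGen.refl
      obtain ⟨z, hz⟩ := exists_canStep h hxy
      have hrz := hz.refines h
      obtain ⟨M, D, p, -, hs, -⟩ := hz
      have := hs.card
      have := hrz.card_le
      exact Relation.ReflTransGen.head hs.covPP (ih _ (by omega) hrz rfl)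

end CanonicalStep

section LabelOrder

theorem not_ltLp_of_fst_lt {a b : ℕ × ℕ × Bool} (h : b.1 < a.1) : ¬ ltLp a b := by
  unfold ltLp
  omega

theorem ltLp_false_true (a b c : ℕ) : ltLp (a, b, false) (a, c, true) :=
  Or.inr ⟨rfl, Or.inl ⟨rfl, rfl⟩⟩

theorem not_ltLp_false {a : ℕ × ℕ × Bool} {b c : ℕ} (h : b ≤ a.1) : ¬ ltLp a (b, c, false) := by
  unfold ltLp
  simp only [Bool.false_eq_true, and_false, false_and, or_false]
  omega

theorem ltLp_true_true_iff {a b c : ℕ} : ltLp (a, b, true) (a, c, true) ↔ b < c := by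
  simp [ltLp]

end LabelOrder

section Comparison

variable {A : Finset ℕ} {y x x' z z'' : PPart A} {M D D' : Finset ℕ × ℕ} {p p' : ℕ}

namespace IsSplit

theorem isFreeBlock_left_iff (hs : IsSplit x z M D p) {c : Finset ℕ × ℕ} :
    IsFreeBlock y (M.1 \ D.1, M.2) c ↔ IsFreeBlock y M c ∧ Disjoint c.1 D.1 := by
  simp only [IsFreeBlock, hs.minB_left, Finset.subset_sdiff]
  tauto

theorem isFreeBlock_right (hs : IsSplit x z M D' M.2) (hD' : D' ∈ y.1) : IsFreeBlock y M D' :=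
  ⟨hD', hs.subset, hs.minB_not_mem, (Finset.mem_sdiff.1 (PPart.pt_mem hs.left_mem)).2⟩

/-- A split of colour `1` splits off a union of free blocks. -/
theorem minB_lt_or_eq (hs : IsSplit x z M D' M.2) (hrz : Refines y z) (hD : D ∈ y.1)
    (hmax : ∀ c, IsFreeBlock y M c → minB c.1 ≤ minB D.1) : minB D'.1 < minB D.1 ∨ D' = D := by
  have hpt : M.2 ∉ D'.1 := (Finset.mem_sdiff.1 (PPart.pt_mem hs.left_mem)).2
  have hfree : ∀ c ∈ y.1, c.1 ⊆ D'.1 → IsFreeBlock y M c := fun c hc hcD' =>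
    ⟨hc, hcD'.trans hs.subset, fun h => hs.minB_not_mem (hcD' h), fun h => hpt (hcD' h)⟩
  obtain ⟨c, hc, hcD', hmin⟩ := hrz.exists_subset hs.right_mem (PPart.minB_mem hs.right_mem)
  have hcmin : minB c.1 = minB D'.1 :=
    le_antisymm (minB_le hmin) (minB_mono (PPart.nonempty hc) hcD')
  refine (hcmin ▸ hmax c (hfree c hc hcD')).lt_or_eq.imp_right fun heq =>
    hrz.eq_of_forall_eq hs.right_mem hD fun c' hc' hc'D' => PPart.eq_of_minB_eq hc' hD ?_
  exact le_antisymm (hmax c' (hfree c' hc' hc'D')) (heq ▸ minB_mono (PPart.nonempty hc') hc'D')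

theorem eq_of_forall_not_isFreeBlock (hs : IsSplit x z M D' p') (hs₀ : IsSplit x x' M D p)
    (hrz : Refines y z) (hfree : ∀ c, ¬ IsFreeBlock y M c) (hD : D ∈ y.1) (hDpt : D.2 = M.2)
    (hL : (M.1 \ D.1, p) ∈ y.1) : z = x' := by
  have hcases := fun {c} => eq_or_eq_of_forall_not_isFreeBlock (c := c) hfree hL
    hs₀.minB_mem_left hD (hDpt ▸ PPart.pt_mem hD)
  obtain rfl : D' = D := hrz.eq_of_forall_eq hs.right_mem hD fun c hc hcD' =>
    (hcases hc (hcD'.trans hs.subset)).resolve_left fun he =>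
      hs.minB_not_mem (hcD' (he ▸ hs₀.minB_mem_left))
  obtain ⟨c, hc, hcL, hcpt⟩ := (hrz _ hs.left_mem).2
  rcases hcases hc (hcL.trans Finset.sdiff_subset) with rfl | rfl
  · obtain rfl : p = p' := hcpt
    exact hs.eq hs₀
  · exact absurd (hcL (PPart.pt_mem hD)) fun h => (Finset.mem_sdiff.1 h).2 (PPart.pt_mem hD)

theorem eq_of_isFreeBlock (hs : IsSplit x z M D' p') (hs₀ : IsSplit x x' M D M.2)
    (hD : IsFreeBlock y M D) (hD' : D' ∈ y.1) (hL' : (M.1 \ D'.1, p') ∈ y.1) : z = x' := by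
  have hDM : D.1 ⊆ (M.1 \ D'.1) ∪ D'.1 := by
    rw [Finset.sdiff_union_of_subset hs.subset]
    exact hD.2.1
  obtain rfl : D = D' := (PPart.eq_or_eq_of_subset_union hL' hD' hD.1 hDM).resolve_left
    fun he => hD.2.2.1 (he ▸ hs.minB_mem_left)
  obtain rfl : M.2 = p' := hs.pt_eq.resolve_right fun he => hD.2.2.2 (he ▸ PPart.pt_mem hD.1)
  exact hs.eq hs₀

theorem isTopBlock_eq_left (hs : IsSplit x z M D' p') (hM : IsTopBlock y x M) (hD' : D' ∈ y.1)
    (hL' : (M.1 \ D'.1, p') ∉ y.1) {T : Finset ℕ × ℕ} (hT : IsTopBlock y z T) :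
    T = (M.1 \ D'.1, p') := by
  rcases hs.mem_cases hT.1 with h | rfl | ⟨hTx, hTM⟩
  · exact h
  · exact absurd hD' hT.2.1
  · have h₁ := (hM.lt_or_eq hTx hT.2.1).resolve_right hTM
    have h₂ := hT.2.2 _ hs.left_mem hL'
    rw [hs.minB_left] at h₂
    omega

end IsSplit

theorem CanStep.ltLp_of_ne (hx' : CanStep y x x') (hcov : covPP z x) (hrz : Refines y z)
    (hne : z ≠ x') : ltLp (labPP z x) (labPP x' x) := by
  obtain ⟨T, D, p, hT, hs₀, hcase⟩ := hx'
  obtain ⟨M, D', p', hs⟩ := hcov.exists_isSplit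
  rw [hs.labPP_eq, hs₀.labPP_eq]
  rcases hT.lt_or_eq hs.mem (hs.not_mem_of_refines hrz) with hlt | rfl
  · exact Or.inl hlt
  rcases hcase with ⟨rfl, hD, hmax⟩ | ⟨hfree, hDy, hDpt, hL⟩
  · by_cases hpt : M.2 = p'
    · subst hpt
      rcases hs.minB_lt_or_eq hrz hD.1 hmax with hlt | rfl
      · simpa [ltLp_true_true_iff] using hlt
      · exact absurd (hs.eq hs₀) hne
    · simpa [hpt] using ltLp_false_true (minB M.1) (minB D'.1) (minB D.1)
  · exact absurd (hs.eq_of_forall_not_isFreeBlock hs₀ hrz hfree hDy hDpt hL) hne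

theorem CanStep.ltLp_canStep {x'' : PPart A} (hx' : CanStep y x x')
    (hx'' : CanStep y x' x'') : ltLp (labPP x'' x') (labPP x' x) := by
  obtain ⟨T, D, p, hT, hs, hcase⟩ := hx'
  obtain ⟨T₂, D₂, p₂, hT₂, hs₂, hcase₂⟩ := hx''
  rw [hs.labPP_eq, hs₂.labPP_eq]
  rcases hs.mem_cases hT₂.1 with rfl | rfl | ⟨hT₂x, hne⟩
  · rcases hcase with ⟨rfl, hD, hmax⟩ | ⟨-, -, -, hL⟩
    · rcases hcase₂ with ⟨rfl, hD₂, -⟩ | ⟨-, hD₂y, hD₂pt, hL₂⟩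
      · obtain ⟨hD₂T, hD₂D⟩ := hs.isFreeBlock_left_iff.1 hD₂
        have hne : minB D₂.1 ≠ minB D.1 := fun he => Finset.disjoint_left.1 hD₂D
          (PPart.minB_mem hD₂.1) (he ▸ PPart.minB_mem hD.1)
        simpa [hs.minB_left, ltLp_true_true_iff] using (hmax D₂ hD₂T).lt_of_ne hne
      · have hpt : T.2 ≠ p₂ := fun he => hs₂.left_ne_right
          (PPart.eq_of_mem_of_mem hL₂ hD₂y (PPart.pt_mem hL₂) (he ▸ hD₂pt ▸ PPart.pt_mem hD₂y))
        simpa [hs.minB_left, hpt] using ltLp_false_true (minB T.1) (minB D₂.1) (minB D.1)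
    · exact absurd hL hT₂.2.1
  · exact absurd (hcase.elim (·.2.1.1) (·.2.1)) hT₂.2.1
  · exact Or.inl ((hT.lt_or_eq hT₂x hT₂.2.1).resolve_right hne)

theorem CanStep.minB_le_fst_labPP (hz'' : CanStep y z z'') {b : Finset ℕ × ℕ} (hb : b ∈ z.1)
    (hby : b ∉ y.1) : minB b.1 ≤ (labPP z'' z).1 := by
  obtain ⟨T, D, p, hT, hs, -⟩ := hz''
  rw [hs.labPP_eq]
  exact hT.2.2 b hb hby

/-- The free block `D` stays in the part of `M` left over, so the next canonical split has colour
`1` and splits off a block of minimum at least `min D > min D'`. -/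
theorem IsSplit.not_ltLp_of_isFreeBlock {M D D' : Finset ℕ × ℕ} (hs : IsSplit x z M D' M.2)
    (hs₀ : IsSplit x x' M D M.2) (hne : z ≠ x') (hM : IsTopBlock y x M) (hD : IsFreeBlock y M D)
    (hmax : ∀ c, IsFreeBlock y M c → minB c.1 ≤ minB D.1) (hD' : D' ∈ y.1)
    (hL' : (M.1 \ D'.1, M.2) ∉ y.1) (hz'' : CanStep y z z'') :
    ¬ ltLp (labPP z'' z) (minB M.1, minB D'.1, true) := by
  have hD'D : D' ≠ D := fun he => hne (hs.eq (he ▸ hs₀))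
  have hlt : minB D'.1 < minB D.1 := (hmax D' (hs.isFreeBlock_right hD')).lt_of_ne fun he =>
    hD'D (PPart.eq_of_minB_eq hD' hD.1 he)
  have hDfree : IsFreeBlock y (M.1 \ D'.1, M.2) D :=
    hs.isFreeBlock_left_iff.2 ⟨hD, PPart.disjoint hD.1 hD' hD'D.symm⟩
  obtain ⟨T₂, D₂, p₂, hT₂, hs₂, hcase₂⟩ := hz''
  obtain rfl := hs.isTopBlock_eq_left hM hD' hL' hT₂
  rcases hcase₂ with ⟨rfl, -, hmax₂⟩ | ⟨hfree₂, -⟩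
  · have := hmax₂ D hDfree
    rw [hs₂.labPP_eq, hs.minB_left]
    simp only [decide_true, ltLp_true_true_iff]
    omega
  · exact absurd hDfree (hfree₂ D)

theorem CanStep.not_ltLp (hx' : CanStep y x x') (hcov : covPP z x) (hrz : Refines y z)
    (hne : z ≠ x') (hz'' : CanStep y z z'') : ¬ ltLp (labPP z'' z) (labPP z x) := by
  obtain ⟨T, D, p, hT, hs₀, hcase⟩ := hx'
  obtain ⟨M, D', p', hs⟩ := hcov.exists_isSplit
  rw [hs.labPP_eq]
  rcases hT.lt_or_eq hs.mem (hs.not_mem_of_refines hrz) with hlt | rfl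
  · have hTz := hs.mem_of_mem hT.1 fun he => (he ▸ hlt).false
    exact not_ltLp_of_fst_lt (hlt.trans_le (hz''.minB_le_fst_labPP hTz hT.2.1))
  by_cases hD'y : D' ∈ y.1
  swap
  · exact not_ltLp_of_fst_lt (hs.minB_lt.trans_le (hz''.minB_le_fst_labPP hs.right_mem hD'y))
  by_cases hL'y : (M.1 \ D'.1, p') ∈ y.1
  · rcases hcase with ⟨rfl, hD, -⟩ | ⟨hfree, hDy, hDpt, hL⟩
    · exact absurd (hs.eq_of_isFreeBlock hs₀ hD hD'y hL'y) hne
    · exact absurd (hs.eq_of_forall_not_isFreeBlock hs₀ hrz hfree hDy hDpt hL) hne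
  by_cases hpt : M.2 = p'
  · subst hpt
    rcases hcase with ⟨rfl, hD, hmax⟩ | ⟨hfree, -⟩
    · simpa using hs.not_ltLp_of_isFreeBlock hs₀ hne hT hD hmax hD'y hL'y hz''
    · exact absurd (hs.isFreeBlock_right hD'y) (hfree D')
  · have := hz''.minB_le_fst_labPP hs.left_mem hL'y
    rw [hs.minB_left] at this
    simpa [hpt] using not_ltLp_false this

end Comparison

theorem isGreedyStep_canStep (A : Finset ℕ) :
    IsGreedyStep (fun x y : PPart A => covPP y x) (fun x y => labPP y x)
      (fun a b => ltLp b a) (fun x => x.1.card) CanStep where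
  rank_cov _ _ h := let ⟨_, _, _, hs⟩ := h.exists_isSplit; hs.card
  exists_step hxy hne := exists_canStep (leOf_covPP_iff.1 hxy) hne
  cov_of_step hxy hz :=
    let ⟨_, _, _, _, hs, _⟩ := hz
    ⟨hs.covPP, leOf_covPP_iff.2 (hz.refines (leOf_covPP_iff.1 hxy))⟩
  lt_of_ne_step hz hw hwy hne := hz.ltLp_of_ne hw (leOf_covPP_iff.1 hwy) hne
  lt_step_step hz hw := hz.ltLp_canStep hw
  not_lt_of_ne_step hz hw hwy hne hv := hz.not_ltLp hw (leOf_covPP_iff.1 hwy) hne hv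

/-- The dual labeling `λ•^*` is an EL-labeling of the order dual
`(Πₙ•)^*`: the cover relations of the order dual carry the same labels, ordered in the
order dual of `Λₙ•`. -/
theorem pointed_dual_lambda_is_EL (n : ℕ) :
    IsELLabeling (fun x y : PPart (Finset.Icc 1 n) => covPP y x)
      (fun x y => labPP y x) (fun a b : ℕ × ℕ × Bool => ltLp b a) :=
  (isGreedyStep_canStep _).isELLabeling
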